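/- Let |ψ> be a three-qubit state with real amplitudes a_{ijk}, and suppose each party i measures A0_i = σ_z or the rank-one projective measurement A1_i with +1-eigenvector cos(α_i/2)|0> + sin(α_i/2)|1>, 0 < α_i < π. If the four Hardy zero conditions hold, then a_{100} = -cot(α_1/2) a_{000}, a_{010} = -cot(α_2/2) a_{000}, and a_{001} = -cot(α_3/2) a_{000}. -/
import Mathlib


/-- The `+1` eigenvector `cos(θ/2)|0⟩ + sin(θ/2)|1⟩` of the measurement `A1`. -/
noncomputable def vPlus (θ : ℝ) : Fin 2 → ℝ := ![Real.cos (θ / 2), Real.sin (θ / 2)]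

/-- The `-1` eigenvector `sin(θ/2)|0⟩ - cos(θ/2)|1⟩` of the measurement `A1`. -/
noncomputable def vMinus (θ : ℝ) : Fin 2 → ℝ := ![Real.sin (θ / 2), -Real.cos (θ / 2)]

/-- The `+1` eigenvector `|0⟩` of `σ_z`. -/
def ket0 : Fin 2 → ℝ := ![1, 0]

/-- For a real three-qubit state, the Hardy zero conditions force the amplitude
relations `a_{100} = -cot(α₁/2) a_{000}`, `a_{010} = -cot(α₂/2) a_{000}`,
`a_{001} = -cot(α₃/2) a_{000}`. -/
theorem hardy_zero_conditions_amplitudes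
    (a : Fin 2 → Fin 2 → Fin 2 → ℝ)
    (hnorm : ∑ i, ∑ j, ∑ k, (a i j k) ^ 2 = 1)
    (α : Fin 3 → ℝ) (hα : ∀ i, 0 < α i ∧ α i < Real.pi)
    (h1 : (∑ i, ∑ j, ∑ k, vPlus (α 0) i * ket0 j * ket0 k * a i j k) ^ 2 = 0)
    (h2 : (∑ i, ∑ j, ∑ k, ket0 i * vPlus (α 1) j * ket0 k * a i j k) ^ 2 = 0)
    (h3 : (∑ i, ∑ j, ∑ k, ket0 i * ket0 j * vPlus (α 2) k * a i j k) ^ 2 = 0)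
    (h4 : (∑ i, ∑ j, ∑ k, vMinus (α 0) i * vMinus (α 1) j * vMinus (α 2) k * a i j k) ^ 2 = 0) :
    a 1 0 0 = -(Real.cos (α 0 / 2) / Real.sin (α 0 / 2)) * a 0 0 0 ∧
    a 0 1 0 = -(Real.cos (α 1 / 2) / Real.sin (α 1 / 2)) * a 0 0 0 ∧
    a 0 0 1 = -(Real.cos (α 2 / 2) / Real.sin (α 2 / 2)) * a 0 0 0 := by

  have hsin : ∀ i : Fin 3, 0 < Real.sin (α i / 2) := fun i =>
    Real.sin_pos_of_pos_of_lt_pi (by linarith [(hα i).1]) (by linarith [(hα i).2, Real.pi_pos])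
  rw [sq_eq_zero_iff] at h1 h2 h3
  simp only [Fin.sum_univ_two, vPlus, ket0, Matrix.cons_val_zero, Matrix.cons_val_one,
    Matrix.head_cons] at h1 h2 h3
  refine ⟨?_, ?_, ?_⟩
  · have h := hsin 0; field_simp; nlinarith [h1]
  · have h := hsin 1; field_simp; nlinarith [h2]
  · have h := hsin 2; field_simp; nlinarith [h3]
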